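/- Let S : X → E be an admissible impact map and A ⊂ E an admissible acceptance set. Then the support function of the systemic acceptance set satisfies σ_{S^{-1}(A)} = usc(α), where usc denotes the σ(X',X)-upper semicontinuous hull. Moreover, if bar(A) ∩ E'_{++} ≠ ∅, then also σ_{S^{-1}(A)} = usc(α⁺). -/

import Mathlib

open MeasureTheory Filter Set
open scoped ENNReal

noncomputable section

namespace SystemicRisk

variable {Ω : Type*} [MeasurableSpace Ω]

/-- A random variable is essentially bounded. -/
def EssBdd {μ : Measure Ω} (f : Ω →ₘ[μ] ℝ) : Prop :=
  ∃ C : ℝ, ∀ᵐ ω ∂μ, |f ω| ≤ C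

/-- The scalar pairing `E[U W]`. -/
def ip {μ : Measure Ω} (U W : Ω →ₘ[μ] ℝ) : ℝ := ∫ ω, U ω * W ω ∂μ

/-- The Köthe dual of a set of random variables. -/
def kdual {μ : Measure Ω} (L : Set (Ω →ₘ[μ] ℝ)) : Set (Ω →ₘ[μ] ℝ) :=
  {Z | ∀ f ∈ L, Integrable (fun ω => f ω * Z ω) μ}

/-- `nrm` is a Banach lattice norm on `L` (w.r.t. the a.s. order). -/
structure IsBLNorm {μ : Measure Ω} (L : Set (Ω →ₘ[μ] ℝ)) (nrm : (Ω →ₘ[μ] ℝ) → ℝ) : Prop where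
  nonneg : ∀ f ∈ L, 0 ≤ nrm f
  eq_zero_iff : ∀ f ∈ L, (nrm f = 0 ↔ f = 0)
  smul_eq : ∀ f ∈ L, ∀ c : ℝ, nrm (c • f) = |c| * nrm f
  triangle : ∀ f ∈ L, ∀ g ∈ L, nrm (f + g) ≤ nrm f + nrm g
  solid : ∀ f ∈ L, ∀ g ∈ L, |f| ≤ |g| → nrm f ≤ nrm g
  complete : ∀ u : ℕ → (Ω →ₘ[μ] ℝ), (∀ n, u n ∈ L) →
      (∀ ε : ℝ, 0 < ε → ∃ N : ℕ, ∀ m ≥ N, ∀ n ≥ N, nrm (u m - u n) < ε) →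
      ∃ f ∈ L, ∀ ε : ℝ, 0 < ε → ∃ N : ℕ, ∀ n ≥ N, nrm (u n - f) < ε

/-- `L` is an admissible space: a linear subspace of `L^0` which is a Banach lattice
(for the a.s. order, with norm `nrm`) satisfying `L^∞ ⊆ L ⊆ L^1`. -/
structure IsAdmissible {μ : Measure Ω} (L : Set (Ω →ₘ[μ] ℝ)) (nrm : (Ω →ₘ[μ] ℝ) → ℝ) : Prop where
  zero_mem : (0 : Ω →ₘ[μ] ℝ) ∈ L
  add_mem : ∀ f ∈ L, ∀ g ∈ L, f + g ∈ L
  smul_mem : ∀ (c : ℝ), ∀ f ∈ L, c • f ∈ L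
  sup_mem : ∀ f ∈ L, ∀ g ∈ L, f ⊔ g ∈ L
  inf_mem : ∀ f ∈ L, ∀ g ∈ L, f ⊓ g ∈ L
  linfty_subset : ∀ f, EssBdd f → f ∈ L
  subset_lone : ∀ f ∈ L, Integrable f μ
  banach : IsBLNorm L nrm

variable {d : ℕ}

/-- The product space `X = X_1 × ⋯ × X_d`. -/
def prodSet {μ : Measure Ω} (Li : Fin d → Set (Ω →ₘ[μ] ℝ)) : Set (Fin d → (Ω →ₘ[μ] ℝ)) :=
  {X | ∀ i, X i ∈ Li i}

/-- The vector pairing `E[⟨X,Z⟩] = ∑ i, E[X_i Z_i]`. -/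
def pairing {μ : Measure Ω} (X Z : Fin d → (Ω →ₘ[μ] ℝ)) : ℝ := ∑ i, ip (X i) (Z i)

/-- The constant random vector associated with `m ∈ ℝ^d`. -/
def cvec (μ : Measure Ω) (m : Fin d → ℝ) : Fin d → (Ω →ₘ[μ] ℝ) :=
  fun i => (AEEqFun.const Ω (m i) : Ω →ₘ[μ] ℝ)

/-- The weak topology `σ(P, D)` on a set of random vectors `P` induced by the pairing
with elements of `D`. -/
def wtop {μ : Measure Ω} (P D : Set (Fin d → (Ω →ₘ[μ] ℝ))) : TopologicalSpace ↥P :=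
  TopologicalSpace.induced
    (fun X : ↥P => fun Z : ↥D => pairing (X : Fin d → (Ω →ₘ[μ] ℝ)) (Z : Fin d → (Ω →ₘ[μ] ℝ)))
    Pi.topologicalSpace

/-- The weak topology `σ(P, D)` on a set of random variables `P` induced by the pairing
with elements of `D`. -/
def wtop1 {μ : Measure Ω} (P D : Set (Ω →ₘ[μ] ℝ)) : TopologicalSpace ↥P :=
  TopologicalSpace.induced
    (fun U : ↥P => fun W : ↥D => ip (U : Ω →ₘ[μ] ℝ) (W : Ω →ₘ[μ] ℝ))
    Pi.topologicalSpace

/-- An admissible impact map `S : X → E`. -/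
structure IsAdmissibleImpact {μ : Measure Ω} (XX XX' : Set (Fin d → (Ω →ₘ[μ] ℝ)))
    (EE EE' : Set (Ω →ₘ[μ] ℝ)) (S : (Fin d → (Ω →ₘ[μ] ℝ)) → (Ω →ₘ[μ] ℝ)) : Prop where
  mapsTo : ∀ X ∈ XX, S X ∈ EE
  nonconst : ∃ X ∈ XX, ∃ Y ∈ XX, S X ≠ S Y
  normalized : S 0 = 0
  mono : ∀ X ∈ XX, ∀ Y ∈ XX, X ≤ Y → S X ≤ S Y
  concave : ∀ X ∈ XX, ∀ Y ∈ XX, ∀ t : ℝ, 0 ≤ t → t ≤ 1 →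
      t • S X + (1 - t) • S Y ≤ S (t • X + (1 - t) • Y)
  usc : ∀ W ∈ EE', (0 : Ω →ₘ[μ] ℝ) ≤ W →
      @UpperSemicontinuous (↥XX) ℝ (wtop XX XX') _
        (fun X : ↥XX => ∫ ω, S (X : Fin d → (Ω →ₘ[μ] ℝ)) ω * W ω ∂μ)

/-- An admissible acceptance set `A ⊆ E` (relative to the impact map `S`). -/
structure IsAdmissibleAcceptance {μ : Measure Ω} (XX : Set (Fin d → (Ω →ₘ[μ] ℝ)))
    (EE EE' : Set (Ω →ₘ[μ] ℝ)) (S : (Fin d → (Ω →ₘ[μ] ℝ)) → (Ω →ₘ[μ] ℝ))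
    (A : Set (Ω →ₘ[μ] ℝ)) : Prop where
  subset : A ⊆ EE
  preimage_nonempty : ∃ X ∈ XX, S X ∈ A
  preimage_proper : ∃ X ∈ XX, S X ∉ A
  zero_mem : (0 : Ω →ₘ[μ] ℝ) ∈ A
  mono : ∀ U ∈ A, ∀ V ∈ EE, (0 : Ω →ₘ[μ] ℝ) ≤ V → U + V ∈ A
  convex : ∀ U ∈ A, ∀ V ∈ A, ∀ t : ℝ, 0 ≤ t → t ≤ 1 → t • U + (1 - t) • V ∈ A
  closed : @IsClosed (↥EE) (wtop1 EE EE') {U : ↥EE | (U : Ω →ₘ[μ] ℝ) ∈ A}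

/-- The systemic acceptance set `S⁻¹(A) = {X ∈ X : S(X) ∈ A}`. -/
def sysAcc {μ : Measure Ω} (XX : Set (Fin d → (Ω →ₘ[μ] ℝ)))
    (S : (Fin d → (Ω →ₘ[μ] ℝ)) → (Ω →ₘ[μ] ℝ)) (A : Set (Ω →ₘ[μ] ℝ)) :
    Set (Fin d → (Ω →ₘ[μ] ℝ)) :=
  {X ∈ XX | S X ∈ A}

/-- The "first allocate, then aggregate" systemic risk measure `ρ`. -/
def rho (μ : Measure Ω) (S : (Fin d → (Ω →ₘ[μ] ℝ)) → (Ω →ₘ[μ] ℝ)) (A : Set (Ω →ₘ[μ] ℝ))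
    (X : Fin d → (Ω →ₘ[μ] ℝ)) : EReal :=
  ⨅ m ∈ {m : Fin d → ℝ | S (X + cvec μ m) ∈ A}, ((∑ i, m i : ℝ) : EReal)

/-- The (lower) support function of a set of random vectors. -/
def suppV {μ : Measure Ω} (B : Set (Fin d → (Ω →ₘ[μ] ℝ))) (Z : Fin d → (Ω →ₘ[μ] ℝ)) : EReal :=
  ⨅ X ∈ B, ((pairing X Z : ℝ) : EReal)

/-- The barrier cone of a set of random vectors, inside the dual set `D`. -/
def barrV {μ : Measure Ω} (B D : Set (Fin d → (Ω →ₘ[μ] ℝ))) : Set (Fin d → (Ω →ₘ[μ] ℝ)) :=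
  {Z ∈ D | ⊥ < suppV B Z}

/-- The (lower) support function of a set of random variables. -/
def suppS {μ : Measure Ω} (A : Set (Ω →ₘ[μ] ℝ)) (W : Ω →ₘ[μ] ℝ) : EReal :=
  ⨅ U ∈ A, ((ip U W : ℝ) : EReal)

/-- The barrier cone of a set of random variables, inside the dual set `D`. -/
def barrS {μ : Measure Ω} (A D : Set (Ω →ₘ[μ] ℝ)) : Set (Ω →ₘ[μ] ℝ) :=
  {W ∈ D | ⊥ < suppS A W}

/-- The generic penalty function with dual variables `W` ranging over `K`. -/
def penalty {μ : Measure Ω} (XX : Set (Fin d → (Ω →ₘ[μ] ℝ)))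
    (A : Set (Ω →ₘ[μ] ℝ)) (S : (Fin d → (Ω →ₘ[μ] ℝ)) → (Ω →ₘ[μ] ℝ))
    (K : Set (Ω →ₘ[μ] ℝ)) (Z : Fin d → (Ω →ₘ[μ] ℝ)) : EReal :=
  ⨆ W ∈ K, (suppS A W +
    ⨅ X ∈ XX, ((pairing X Z - ∫ ω, S X ω * W ω ∂μ : ℝ) : EReal))

/-- a.s. strictly positive random variables. -/
def strictPos (μ : Measure Ω) : Set (Ω →ₘ[μ] ℝ) := {W | ∀ᵐ ω ∂μ, 0 < W ω}

/-- The penalty function `α`. -/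
def alpha {μ : Measure Ω} (XX : Set (Fin d → (Ω →ₘ[μ] ℝ))) (EE' : Set (Ω →ₘ[μ] ℝ))
    (A : Set (Ω →ₘ[μ] ℝ)) (S : (Fin d → (Ω →ₘ[μ] ℝ)) → (Ω →ₘ[μ] ℝ)) :
    (Fin d → (Ω →ₘ[μ] ℝ)) → EReal :=
  penalty XX A S (barrS A EE')

/-- The penalty function `α⁺`. -/
def alphaPlus {μ : Measure Ω} (XX : Set (Fin d → (Ω →ₘ[μ] ℝ))) (EE' : Set (Ω →ₘ[μ] ℝ))
    (A : Set (Ω →ₘ[μ] ℝ)) (S : (Fin d → (Ω →ₘ[μ] ℝ)) → (Ω →ₘ[μ] ℝ)) :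
    (Fin d → (Ω →ₘ[μ] ℝ)) → EReal :=
  penalty XX A S (barrS A EE' ∩ (strictPos μ ∪ {0}))

/-- a.s. strictly positive random vectors. -/
def strictPosV (μ : Measure Ω) (d : ℕ) : Set (Fin d → (Ω →ₘ[μ] ℝ)) :=
  {Z | ∀ i, ∀ᵐ ω ∂μ, 0 < Z i ω}

/-- The set `C` of nonnegative dual vectors with all components of expectation one. -/
def Cset {μ : Measure Ω} (XX' : Set (Fin d → (Ω →ₘ[μ] ℝ))) : Set (Fin d → (Ω →ₘ[μ] ℝ)) :=
  {Z ∈ XX' | (∀ i, (0 : Ω →ₘ[μ] ℝ) ≤ Z i) ∧ ∀ i, (∫ ω, Z i ω ∂μ) = 1}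

/-- A map with values in `[−∞,∞]` is proper on `P` if it never attains `−∞` on `P`
and is finite somewhere on `P`. -/
def ProperOn {β : Type*} (P : Set β) (f : β → EReal) : Prop :=
  (∀ x ∈ P, f x ≠ ⊥) ∧ ∃ x ∈ P, f x ≠ ⊤

/-- The positive part of an extended real number, as an extended nonnegative real. -/
def epos (x : EReal) : ℝ≥0∞ := if x = ⊤ then ⊤ else ENNReal.ofReal x.toReal

/-- The integral of an extended-real-valued function. -/
def eintegral (μ : Measure Ω) (g : Ω → EReal) : EReal :=
  ((∫⁻ ω, epos (g ω) ∂μ : ℝ≥0∞) : EReal) - ((∫⁻ ω, epos (-(g ω)) ∂μ : ℝ≥0∞) : EReal)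


/-- The upper semicontinuous hull of an extended-real-valued map (w.r.t. a topology `t`):
the smallest `t`-upper semicontinuous map dominating it. -/
def uscHull {β : Type*} (t : TopologicalSpace β) (f : β → EReal) : β → EReal :=
  fun x => ⨅ g ∈ {g : β → EReal | @UpperSemicontinuous β EReal t _ g ∧ ∀ y, f y ≤ g y}, g x

/-!
Weak duality gives `α ≤ σ_{S⁻¹(A)}`: for `X ∈ S⁻¹(A)` and `W ∈ bar(A)`,
`σ_A(W) + E[⟨X, Z⟩] - E[S(X) W] ≤ E[⟨X, Z⟩]`; and `σ_{S⁻¹(A)}` is upper semicontinuous as an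
infimum of continuous linear functionals, so `usc(α) ≤ σ_{S⁻¹(A)}`.

Conversely, let `g ≥ α` be upper semicontinuous with `g(Z₀) < c' < σ_{S⁻¹(A)}(Z₀)`. Then
`α < c < c'` on a weak neighbourhood of `Z₀`, which is cut out by finitely many `X_j`. Separating
the concave hypograph of `α` in the finite-dimensional image yields a position `X` and a constant
`C` with `α ≤ E[⟨X, ·⟩] - C` and `E[⟨X, Z₀⟩] < c'` (when the separating hyperplane is vertical,
`X` is a point of `S⁻¹(A)` pushed far along its normal). Such an `X` lies in `S⁻¹(A)`: otherwise
a positive `W` separating `S(X)` from `A`, together with an affine majorant of the concave usc map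
`Y ↦ E[S(Y) W]`, makes `α` grow linearly along a ray, faster than the affine bound permits.
Hence `σ_{S⁻¹(A)}(Z₀) < c'`, a contradiction.

The argument only uses that the dual variables range over a convex cone `K ⊆ bar(A)` containing
`0` that separates every `S(X) ∉ A` from `A`. For `α⁺` the separating functionals are made
strictly positive by adding a small multiple of an element of `bar(A) ∩ E'₊₊`.
-/

open Topology

lemma exists_coe_le_coe_le_of_lt_add {x y : EReal} {c : ℝ} (h : (c : EReal) < x + y) :
    ∃ s i : ℝ, (s : EReal) ≤ x ∧ (i : EReal) ≤ y ∧ c < s + i := by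
  induction x using EReal.rec with
  | bot => simp at h
  | top =>
    induction y using EReal.rec with
    | bot => simp at h
    | top => exact ⟨c, 1, le_top, le_top, by linarith⟩
    | coe r => exact ⟨c - r + 1, r, le_top, le_rfl, by linarith⟩
  | coe s =>
    induction y using EReal.rec with
    | bot => simp at h
    | top => exact ⟨s, c - s + 1, le_rfl, le_top, by linarith⟩
    | coe r => exact ⟨s, r, le_rfl, le_rfl, by exact_mod_cast h⟩

section Hypograph

variable {V : Type*} [AddCommGroup V] [Module ℝ V] {P : Set V} {φ : V → EReal}

lemma convex_hypograph_of_convex_strict_hypograph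
    (h : Convex ℝ {p : V × ℝ | p.1 ∈ P ∧ (p.2 : EReal) < φ p.1}) :
    Convex ℝ {p : V × ℝ | p.1 ∈ P ∧ (p.2 : EReal) ≤ φ p.1} := by
  rintro ⟨x, s⟩ ⟨hx, hs⟩ ⟨y, t⟩ ⟨hy, ht⟩ a b ha hb hab
  have shift : ∀ δ : ℝ, 0 < δ →
      (a • x + b • y, a * s + b * t - δ) ∈ {p : V × ℝ | p.1 ∈ P ∧ (p.2 : EReal) < φ p.1} := by
    intro δ hδ
    have hxδ : (x, s - δ) ∈ {p : V × ℝ | p.1 ∈ P ∧ (p.2 : EReal) < φ p.1} :=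
      ⟨hx, lt_of_lt_of_le (EReal.coe_lt_coe_iff.2 (by linarith)) hs⟩
    have hyδ : (y, t - δ) ∈ {p : V × ℝ | p.1 ∈ P ∧ (p.2 : EReal) < φ p.1} :=
      ⟨hy, lt_of_lt_of_le (EReal.coe_lt_coe_iff.2 (by linarith)) ht⟩
    convert h hxδ hyδ ha hb hab using 1
    ext
    · rfl
    · simp only [Prod.snd_add, Prod.smul_snd, smul_eq_mul]
      linear_combination δ * hab
  refine ⟨(shift 1 one_pos).1, EReal.ge_of_forall_gt_iff_ge.1 fun z hz => ?_⟩
  have hz' : z < a * s + b * t := EReal.coe_lt_coe_iff.1 hz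
  simpa using (shift (a * s + b * t - z) (by linarith)).2.le

end Hypograph

lemma exists_finset_box_subset_of_mem_nhds {γ Q : Type*} (pr : γ → Q → ℝ) {p₀ : γ} {s : Set γ}
    (hs : s ∈ @nhds γ (TopologicalSpace.induced pr Pi.topologicalSpace) p₀) :
    ∃ (F : Finset Q) (ε : ℝ), 0 < ε ∧ ∀ p, (∀ q ∈ F, |pr p q - pr p₀ q| < ε) → p ∈ s := by
  rw [nhds_induced, Filter.mem_comap, nhds_pi] at hs
  obtain ⟨T, hT, hTs⟩ := hs
  obtain ⟨F, t, ht, hFt⟩ := Filter.mem_pi'.1 hT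
  have hball : ∀ q ∈ F, ∀ᶠ ε in 𝓝[>] (0 : ℝ), Metric.ball (pr p₀ q) ε ⊆ t q := fun q _ => by
    obtain ⟨e, he, hsub⟩ := Metric.mem_nhds_iff.1 (ht q)
    filter_upwards [Ioo_mem_nhdsGT he] with ε hε using
      (Metric.ball_subset_ball hε.2.le).trans hsub
  obtain ⟨ε, hεF, hε⟩ :=
    (((Filter.eventually_all_finset F).2 hball).and self_mem_nhdsWithin).exists
  refine ⟨F, ε, hε, fun p hp => hTs (hFt fun q hq => hεF q hq ?_)⟩
  rw [Metric.mem_ball, Real.dist_eq]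
  exact hp q hq

lemma exists_eq_sum_mul_add_mul {ι : Type*} [Fintype ι] [DecidableEq ι]
    (f : ((ι → ℝ) × ℝ) →ₗ[ℝ] ℝ) :
    ∃ (lam : ι → ℝ) (a : ℝ), ∀ p, f p = ∑ j, lam j * p.1 j + a * p.2 := by
  refine ⟨fun j => f (fun k => if j = k then 1 else 0, 0), f (0, 1), fun p => ?_⟩
  calc f p = (f ∘ₗ LinearMap.inl ℝ (ι → ℝ) ℝ) p.1 + p.2 • f (0, 1) := by
        rw [← map_smul, LinearMap.comp_apply, LinearMap.inl_apply, ← map_add]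
        congr 1
        ext <;> simp
    _ = _ := by
        rw [LinearMap.pi_apply_eq_sum_univ]
        simp [mul_comm]

section Separation

variable {V : Type*} [AddCommGroup V] [Module ℝ V] {P : Set V} {φ : V → EReal}

/-- The hypograph of `φ`, read through the affine coordinates `L`, is strictly separated from
`(0, c')`. -/
theorem exists_separation_of_box {ι : Type*} [Fintype ι]
    (hφ : Convex ℝ {p : V × ℝ | p.1 ∈ P ∧ (p.2 : EReal) ≤ φ p.1}) (L : ι → V → ℝ)
    (hL : ∀ j, ∀ x ∈ P, ∀ y ∈ P, ∀ a b : ℝ, 0 ≤ a → 0 ≤ b → a + b = 1 →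
      L j (a • x + b • y) = a * L j x + b * L j y)
    {ε c c' : ℝ} (hε : 0 < ε) (hcc' : c < c') (hbox : ∀ x ∈ P, (∀ j, |L j x| < ε) → φ x < c)
    {x₁ : V} (hx₁ : x₁ ∈ P) {t₁ : ℝ} (ht₁ : (t₁ : EReal) ≤ φ x₁) :
    ∃ (lam : ι → ℝ) (a u : ℝ), a ≤ 0 ∧ a * c' < u ∧
      ∀ x ∈ P, ∀ t : ℝ, (t : EReal) ≤ φ x → u < ∑ j, lam j * L j x + a * t := by
  classical
  set D : Set ((ι → ℝ) × ℝ) := (fun p : V × ℝ => (fun j => L j p.1, p.2)) ''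
    {p : V × ℝ | p.1 ∈ P ∧ (p.2 : EReal) ≤ φ p.1}
  have hD : Convex ℝ D := by
    rintro _ ⟨p, hp, rfl⟩ _ ⟨q, hq, rfl⟩ a b ha hb hab
    refine ⟨a • p + b • q, hφ hp hq ha hb hab, ?_⟩
    ext j
    · simp [hL j _ hp.1 _ hq.1 a b ha hb hab]
    · simp
  have hq₀ : ((0 : ι → ℝ), c') ∉ closure D := by
    rw [Metric.mem_closure_iff]
    push Not
    refine ⟨min ε (c' - c), lt_min hε (by linarith), ?_⟩
    rintro _ ⟨⟨x, t⟩, ⟨hx, ht⟩, rfl⟩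
    by_contra! hdist
    rw [Prod.dist_eq, max_lt_iff, lt_min_iff, lt_min_iff] at hdist
    have hφx : φ x < c := hbox x hx fun j => by
      simpa [Real.dist_eq] using (dist_pi_lt_iff hε).1 hdist.1.1 j
    have htc : c < t := by
      have := hdist.2.2
      rw [Real.dist_eq, abs_lt] at this
      linarith
    exact absurd (ht.trans_lt hφx) (not_lt.2 (EReal.coe_le_coe_iff.2 htc.le))
  obtain ⟨f, u, hfq, hfD⟩ := geometric_hahn_banach_point_closed hD.closure isClosed_closure hq₀
  obtain ⟨lam, a, hf⟩ := exists_eq_sum_mul_add_mul (f : ((ι → ℝ) × ℝ) →ₗ[ℝ] ℝ)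
  replace hf : ∀ p, f p = ∑ j, lam j * p.1 j + a * p.2 := hf
  have hsep : ∀ x ∈ P, ∀ t : ℝ, (t : EReal) ≤ φ x → u < ∑ j, lam j * L j x + a * t :=
    fun x hx t ht => by simpa [hf] using hfD _ (subset_closure ⟨(x, t), ⟨hx, ht⟩, rfl⟩)
  refine ⟨lam, a, u, ?_, by simpa [hf] using hfq, hsep⟩
  -- the hypograph is unbounded below, which rules out an upward-pointing normal
  by_contra! ha
  set C := ∑ j, lam j * L j x₁
  have := hsep x₁ hx₁ (min t₁ ((u - C) / a))
    ((EReal.coe_le_coe_iff.2 (min_le_left _ _)).trans ht₁)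
  have hmul : a * min t₁ ((u - C) / a) ≤ u - C := by
    calc a * min t₁ ((u - C) / a) ≤ a * ((u - C) / a) :=
          mul_le_mul_of_nonneg_left (min_le_right _ _) ha.le
      _ = u - C := mul_div_cancel₀ _ ha.ne'
  linarith

theorem exists_local_separation {Q : Type*} {T : Set V} (hPT : P ⊆ T)
    (hφ : Convex ℝ {p : V × ℝ | p.1 ∈ P ∧ (p.2 : EReal) ≤ φ p.1}) (pr : V → Q → ℝ)
    (hpr : ∀ q, ∀ x ∈ P, ∀ y ∈ P, ∀ a b : ℝ, 0 ≤ a → 0 ≤ b → a + b = 1 →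
      pr (a • x + b • y) q = a * pr x q + b * pr y q)
    {x₀ : T} {c c' : ℝ} (hcc' : c < c')
    (hev : ∀ᶠ x : T in @nhds T (TopologicalSpace.induced (fun (x : T) q => pr x q)
      Pi.topologicalSpace) x₀, (x : V) ∈ P → φ x < c)
    {x₁ : V} (hx₁ : x₁ ∈ P) {t₁ : ℝ} (ht₁ : (t₁ : EReal) ≤ φ x₁) :
    ∃ (F : Finset Q) (lam : F → ℝ) (a u : ℝ), a ≤ 0 ∧ a * c' < u ∧
      ∀ x ∈ P, ∀ t : ℝ, (t : EReal) ≤ φ x → u < ∑ j, lam j * (pr x j - pr x₀ j) + a * t := by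
  obtain ⟨F, ε, hε, hbox⟩ := exists_finset_box_subset_of_mem_nhds _ hev
  refine ⟨F, exists_separation_of_box hφ (fun (j : F) x => pr x j - pr x₀ j) ?_ hε hcc' ?_ hx₁ ht₁⟩
  · intro j x hx y hy a b ha hb hab
    rw [hpr j x hx y hy a b ha hb hab]
    linear_combination pr x₀ j * hab
  · exact fun x hx hxF => hbox ⟨x, hPT hx⟩ (fun q hq => hxF ⟨q, hq⟩) hx

end Separation

section Pairing

variable {μ : Measure Ω}

lemma ip_comm (U W : Ω →ₘ[μ] ℝ) : ip U W = ip W U := by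
  simp only [ip, mul_comm]

lemma ip_smul_right (c : ℝ) (U W : Ω →ₘ[μ] ℝ) : ip U (c • W) = c * ip U W := by
  rw [ip, ip, ← integral_const_mul]
  refine integral_congr_ae ?_
  filter_upwards [AEEqFun.coeFn_smul c W] with ω hω
  simp [hω, mul_left_comm]

lemma ip_smul_left (c : ℝ) (U W : Ω →ₘ[μ] ℝ) : ip (c • U) W = c * ip U W := by
  rw [ip_comm, ip_smul_right, ip_comm]

lemma ip_zero_right (U : Ω →ₘ[μ] ℝ) : ip U 0 = 0 := by
  simpa using ip_smul_right 0 U 0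

lemma ip_add_right {U V W : Ω →ₘ[μ] ℝ} (hV : Integrable (fun ω => U ω * V ω) μ)
    (hW : Integrable (fun ω => U ω * W ω) μ) : ip U (V + W) = ip U V + ip U W := by
  rw [ip, ip, ip, ← integral_add hV hW]
  refine integral_congr_ae ?_
  filter_upwards [AEEqFun.coeFn_add V W] with ω hω
  simp [hω, mul_add]

lemma ip_mono_left {U V W : Ω →ₘ[μ] ℝ} (hUV : U ≤ V) (hW : 0 ≤ W)
    (hU : Integrable (fun ω => U ω * W ω) μ) (hV : Integrable (fun ω => V ω * W ω) μ) :
    ip U W ≤ ip V W := by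
  refine integral_mono_ae hU hV ?_
  filter_upwards [AEEqFun.coeFn_le.2 hUV, AEEqFun.coeFn_le.2 hW,
    AEEqFun.coeFn_zero (μ := μ) (β := ℝ)] with ω hUVω hWω h0
  exact mul_le_mul_of_nonneg_right hUVω (by simpa [h0] using hWω)

def kdualSubmodule (L : Set (Ω →ₘ[μ] ℝ)) : Submodule ℝ (Ω →ₘ[μ] ℝ) where
  carrier := kdual L
  add_mem' {V W} hV hW f hf := ((hV f hf).add (hW f hf)).congr <| by
    filter_upwards [AEEqFun.coeFn_add V W] with ω hω
    simp [hω, mul_add]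
  zero_mem' f _ := (integrable_zero Ω ℝ μ).congr <| by
    filter_upwards [AEEqFun.coeFn_zero (μ := μ) (β := ℝ)] with ω hω
    simp [hω]
  smul_mem' c W hW f hf := ((hW f hf).const_mul c).congr <| by
    filter_upwards [AEEqFun.coeFn_smul c W] with ω hω
    simp [hω, mul_left_comm]

lemma subset_kdual_kdual (L : Set (Ω →ₘ[μ] ℝ)) : L ⊆ kdual (kdual L) :=
  fun f hf Z hZ => (hZ f hf).congr (by filter_upwards with ω using mul_comm _ _)

variable {L : Set (Ω →ₘ[μ] ℝ)}

lemma ip_smul_add_smul_right {U V W : Ω →ₘ[μ] ℝ} (hU : U ∈ L) (hV : V ∈ kdual L)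
    (hW : W ∈ kdual L) (a b : ℝ) : ip U (a • V + b • W) = a * ip U V + b * ip U W := by
  rw [ip_add_right ((kdualSubmodule L).smul_mem a hV U hU)
    ((kdualSubmodule L).smul_mem b hW U hU), ip_smul_right, ip_smul_right]

lemma ip_smul_add_smul_left {U V W : Ω →ₘ[μ] ℝ} (hU : U ∈ L) (hV : V ∈ L) (hW : W ∈ kdual L)
    (a b : ℝ) : ip (a • U + b • V) W = a * ip U W + b * ip V W := by
  rw [ip_comm, ip_smul_add_smul_right hW (subset_kdual_kdual L hU) (subset_kdual_kdual L hV),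
    ip_comm U, ip_comm V]

lemma ip_sum_smul_right {ι : Type*} {U : Ω →ₘ[μ] ℝ} (hU : U ∈ L) (F : Finset ι) (c : ι → ℝ)
    {W : ι → Ω →ₘ[μ] ℝ} (hW : ∀ j ∈ F, W j ∈ kdual L) :
    ip U (∑ j ∈ F, c j • W j) = ∑ j ∈ F, c j * ip U (W j) := by
  classical
  induction F using Finset.induction with
  | empty => simp [ip_zero_right]
  | insert j F hj ih =>
    have hWF : ∑ k ∈ F, c k • W k ∈ kdual L := (kdualSubmodule L).sum_mem fun k hk =>
      (kdualSubmodule L).smul_mem _ (hW k (Finset.mem_insert_of_mem hk))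
    rw [Finset.sum_insert hj, Finset.sum_insert hj,
      ip_add_right ((kdualSubmodule L).smul_mem _ (hW j (Finset.mem_insert_self j F)) U hU)
        (hWF U hU), ip_smul_right, ih fun k hk => hW k (Finset.mem_insert_of_mem hk)]

variable {Li : Fin d → Set (Ω →ₘ[μ] ℝ)}

lemma pairing_comm (X Z : Fin d → Ω →ₘ[μ] ℝ) : pairing X Z = pairing Z X := by
  simp only [pairing, ip_comm]

lemma pairing_smul_right (c : ℝ) (X Z : Fin d → Ω →ₘ[μ] ℝ) :
    pairing X (c • Z) = c * pairing X Z := by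
  simp only [pairing, Pi.smul_apply, ip_smul_right, Finset.mul_sum]

lemma pairing_smul_left (c : ℝ) (X Z : Fin d → Ω →ₘ[μ] ℝ) :
    pairing (c • X) Z = c * pairing X Z := by
  rw [pairing_comm, pairing_smul_right, pairing_comm]

lemma pairing_zero_right (X : Fin d → Ω →ₘ[μ] ℝ) : pairing X 0 = 0 := by
  simpa using pairing_smul_right 0 X 0

lemma pairing_smul_add_smul_right {X Z Z' : Fin d → Ω →ₘ[μ] ℝ} (hX : X ∈ prodSet Li)
    (hZ : Z ∈ prodSet fun i => kdual (Li i)) (hZ' : Z' ∈ prodSet fun i => kdual (Li i))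
    (a b : ℝ) : pairing X (a • Z + b • Z') = a * pairing X Z + b * pairing X Z' := by
  simp only [pairing, Pi.add_apply, Pi.smul_apply,
    ip_smul_add_smul_right (hX _) (hZ _) (hZ' _), Finset.sum_add_distrib, Finset.mul_sum]

lemma pairing_sum_smul_right {ι : Type*} {X : Fin d → Ω →ₘ[μ] ℝ} (hX : X ∈ prodSet Li)
    (F : Finset ι) (c : ι → ℝ) {Z : ι → Fin d → Ω →ₘ[μ] ℝ}
    (hZ : ∀ j ∈ F, Z j ∈ prodSet fun i => kdual (Li i)) :
    pairing X (∑ j ∈ F, c j • Z j) = ∑ j ∈ F, c j * pairing X (Z j) := by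
  simp only [pairing, Finset.sum_apply, Pi.smul_apply,
    ip_sum_smul_right (hX _) F c fun j hj => hZ j hj _, Finset.mul_sum]
  exact Finset.sum_comm

lemma prodSet_subset_kdual_kdual : prodSet Li ⊆ prodSet fun i => kdual (kdual (Li i)) :=
  fun _ hX i => subset_kdual_kdual _ (hX i)

lemma pairing_smul_add_smul_left {X X' Z : Fin d → Ω →ₘ[μ] ℝ} (hX : X ∈ prodSet Li)
    (hX' : X' ∈ prodSet Li) (hZ : Z ∈ prodSet fun i => kdual (Li i)) (a b : ℝ) :
    pairing (a • X + b • X') Z = a * pairing X Z + b * pairing X' Z := by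
  rw [pairing_comm, pairing_smul_add_smul_right hZ (prodSet_subset_kdual_kdual hX)
    (prodSet_subset_kdual_kdual hX'), pairing_comm Z, pairing_comm Z]

lemma sum_smul_mem_prodSet_kdual {ι : Type*} (F : Finset ι) (c : ι → ℝ)
    {Z : ι → Fin d → Ω →ₘ[μ] ℝ} (hZ : ∀ j ∈ F, Z j ∈ prodSet fun i => kdual (Li i)) :
    ∑ j ∈ F, c j • Z j ∈ prodSet fun i => kdual (Li i) := fun i => by
  rw [Finset.sum_apply]
  exact (kdualSubmodule _).sum_mem fun j hj => (kdualSubmodule _).smul_mem _ (hZ j hj i)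

lemma convex_prodSet_kdual : Convex ℝ (prodSet fun i => kdual (Li i)) :=
  fun _ hZ _ hZ' a b _ _ _ i =>
    (kdualSubmodule _).add_mem ((kdualSubmodule _).smul_mem a (hZ i))
      ((kdualSubmodule _).smul_mem b (hZ' i))

end Pairing

section Admissible

variable {μ : Measure Ω} {L : Set (Ω →ₘ[μ] ℝ)} {nrm : (Ω →ₘ[μ] ℝ) → ℝ}

def IsAdmissible.toSubmodule (h : IsAdmissible L nrm) : Submodule ℝ (Ω →ₘ[μ] ℝ) where
  carrier := L
  add_mem' hf hg := h.add_mem _ hf _ hg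
  zero_mem' := h.zero_mem
  smul_mem' c _ hf := h.smul_mem c _ hf

variable {Li : Fin d → Set (Ω →ₘ[μ] ℝ)} {nrmX : Fin d → (Ω →ₘ[μ] ℝ) → ℝ}

lemma sum_smul_mem_prodSet (hLi : ∀ i, IsAdmissible (Li i) (nrmX i)) {ι : Type*}
    (F : Finset ι) (c : ι → ℝ) {X : ι → Fin d → Ω →ₘ[μ] ℝ} (hX : ∀ j ∈ F, X j ∈ prodSet Li) :
    ∑ j ∈ F, c j • X j ∈ prodSet Li := fun i => by
  rw [Finset.sum_apply]
  exact (hLi i).toSubmodule.sum_mem fun j hj => (hLi i).toSubmodule.smul_mem _ (hX j hj i)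

lemma smul_add_smul_mem_prodSet (hLi : ∀ i, IsAdmissible (Li i) (nrmX i))
    {X Y : Fin d → Ω →ₘ[μ] ℝ} (hX : X ∈ prodSet Li) (hY : Y ∈ prodSet Li) (a b : ℝ) :
    a • X + b • Y ∈ prodSet Li := fun i =>
  (hLi i).add_mem _ ((hLi i).smul_mem a _ (hX i)) _ ((hLi i).smul_mem b _ (hY i))

lemma convex_prodSet (hLi : ∀ i, IsAdmissible (Li i) (nrmX i)) : Convex ℝ (prodSet Li) :=
  fun _ hX _ hY a b _ _ _ => smul_add_smul_mem_prodSet hLi hX hY a b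

end Admissible

section Penalty

variable {μ : Measure Ω} {XX : Set (Fin d → Ω →ₘ[μ] ℝ)} {S : (Fin d → Ω →ₘ[μ] ℝ) → Ω →ₘ[μ] ℝ}
  {A K : Set (Ω →ₘ[μ] ℝ)}

lemma coe_le_penalty {Z : Fin d → Ω →ₘ[μ] ℝ} {W : Ω →ₘ[μ] ℝ} (hW : W ∈ K) {s i : ℝ}
    (hs : ∀ U ∈ A, s ≤ ip U W) (hi : ∀ Y ∈ XX, i ≤ pairing Y Z - ip (S Y) W) :
    ((s + i : ℝ) : EReal) ≤ penalty XX A S K Z := by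
  refine le_trans ?_ (le_iSup₂_of_le W hW le_rfl)
  rw [EReal.coe_add]
  exact add_le_add (le_iInf₂ fun U hU => EReal.coe_le_coe_iff.2 (hs U hU))
    (le_iInf₂ fun Y hY => EReal.coe_le_coe_iff.2 (hi Y hY))

lemma exists_of_coe_lt_penalty {Z : Fin d → Ω →ₘ[μ] ℝ} {c : ℝ}
    (h : (c : EReal) < penalty XX A S K Z) :
    ∃ W ∈ K, ∃ s i : ℝ, c < s + i ∧ (∀ U ∈ A, s ≤ ip U W) ∧
      ∀ Y ∈ XX, i ≤ pairing Y Z - ip (S Y) W := by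
  simp only [penalty, lt_iSup_iff] at h
  obtain ⟨W, hW, hlt⟩ := h
  obtain ⟨s, i, hs, hi, hsi⟩ := exists_coe_le_coe_le_of_lt_add hlt
  exact ⟨W, hW, s, i, hsi, fun U hU => EReal.coe_le_coe_iff.1 (hs.trans (iInf₂_le U hU)),
    fun Y hY => EReal.coe_le_coe_iff.1 (hi.trans (iInf₂_le Y hY))⟩

lemma penalty_le_suppV (Z : Fin d → Ω →ₘ[μ] ℝ) :
    penalty XX A S K Z ≤ suppV (sysAcc XX S A) Z := by
  refine iSup₂_le fun W _ => le_iInf₂ fun X hX => ?_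
  calc suppS A W + ⨅ Y ∈ XX, ((pairing Y Z - ∫ ω, S Y ω * W ω ∂μ : ℝ) : EReal)
      ≤ ((ip (S X) W : ℝ) : EReal) + ((pairing X Z - ip (S X) W : ℝ) : EReal) :=
        add_le_add (iInf₂_le _ hX.2) (iInf₂_le X hX.1)
    _ = pairing X Z := by rw [← EReal.coe_add, add_sub_cancel]

lemma penalty_zero_nonneg (hK : (0 : Ω →ₘ[μ] ℝ) ∈ K) : 0 ≤ penalty XX A S K 0 := by
  simpa using coe_le_penalty (XX := XX) (A := A) (S := S) (Z := 0) hK (s := 0) (i := 0)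
    (fun U _ => (ip_zero_right U).ge) (fun Y _ => by simp [pairing_zero_right, ip_zero_right])

variable {Li : Fin d → Set (Ω →ₘ[μ] ℝ)} {EE : Set (Ω →ₘ[μ] ℝ)}

lemma convex_strict_hypograph_penalty (hK : Convex ℝ K) (hKE : K ⊆ kdual EE) (hAE : A ⊆ EE)
    (hSE : ∀ X ∈ prodSet Li, S X ∈ EE) :
    Convex ℝ {p : (Fin d → Ω →ₘ[μ] ℝ) × ℝ | p.1 ∈ prodSet (fun i => kdual (Li i)) ∧
      (p.2 : EReal) < penalty (prodSet Li) A S K p.1} := by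
  rintro ⟨x, s⟩ ⟨hx, hs⟩ ⟨y, t⟩ ⟨hy, ht⟩ a b ha hb hab
  obtain ⟨W₁, hW₁, s₁, i₁, hsi₁, hs₁, hi₁⟩ := exists_of_coe_lt_penalty hs
  obtain ⟨W₂, hW₂, s₂, i₂, hsi₂, hs₂, hi₂⟩ := exists_of_coe_lt_penalty ht
  refine ⟨convex_prodSet_kdual hx hy ha hb hab, lt_of_lt_of_le ?_
    (coe_le_penalty (hK hW₁ hW₂ ha hb hab) (s := a * s₁ + b * s₂) (i := a * i₁ + b * i₂) ?_ ?_)⟩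
  · replace hsi₁ : s < s₁ + i₁ := hsi₁
    replace hsi₂ : t < s₂ + i₂ := hsi₂
    refine EReal.coe_lt_coe_iff.2 ?_
    simp only [Prod.snd_add, Prod.smul_snd, smul_eq_mul]
    rcases ha.eq_or_lt with rfl | ha
    · nlinarith
    · nlinarith [mul_lt_mul_of_pos_left hsi₁ ha, mul_le_mul_of_nonneg_left hsi₂.le hb]
  · intro U hU
    rw [ip_smul_add_smul_right (hAE hU) (hKE hW₁) (hKE hW₂)]
    nlinarith [mul_le_mul_of_nonneg_left (hs₁ U hU) ha, mul_le_mul_of_nonneg_left (hs₂ U hU) hb]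
  · intro Y hY
    simp only [Prod.fst_add, Prod.smul_fst]
    rw [pairing_smul_add_smul_right hY hx hy,
      ip_smul_add_smul_right (hSE Y hY) (hKE hW₁) (hKE hW₂)]
    nlinarith [mul_le_mul_of_nonneg_left (hi₁ Y hY) ha, mul_le_mul_of_nonneg_left (hi₂ Y hY) hb]

end Penalty

lemma upperSemicontinuous_suppV {μ : Measure Ω} {P D B : Set (Fin d → Ω →ₘ[μ] ℝ)}
    (hBD : B ⊆ D) :
    @UpperSemicontinuous P EReal (wtop P D) _ fun Z => suppV B (Z : Fin d → Ω →ₘ[μ] ℝ) := by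
  let _ : TopologicalSpace P := wtop P D
  refine upperSemicontinuous_iInf fun X => upperSemicontinuous_iInf fun hX => ?_
  have hc : Continuous fun Z : P => pairing (Z : Fin d → Ω →ₘ[μ] ℝ) X :=
    (continuous_apply (⟨X, hBD hX⟩ : D)).comp (continuous_induced_dom
      (f := fun (Z : P) (X : D) => pairing (Z : Fin d → Ω →ₘ[μ] ℝ) (X : Fin d → Ω →ₘ[μ] ℝ)))
  simp only [pairing_comm X]
  exact (continuous_coe_real_ereal.comp hc).upperSemicontinuous

lemma uscHull_le {β : Type*} {t : TopologicalSpace β} {f g : β → EReal}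
    (hg : @UpperSemicontinuous β EReal t _ g) (hfg : ∀ y, f y ≤ g y) (x : β) :
    uscHull t f x ≤ g x :=
  iInf₂_le g ⟨hg, hfg⟩

section BarrierCone

variable {μ : Measure Ω} {A EE : Set (Ω →ₘ[μ] ℝ)}

lemma mem_barrS_iff {D : Set (Ω →ₘ[μ] ℝ)} {W : Ω →ₘ[μ] ℝ} :
    W ∈ barrS A D ↔ W ∈ D ∧ ∃ s : ℝ, ∀ U ∈ A, s ≤ ip U W := by
  refine and_congr_right fun _ => ⟨fun h => ?_, fun ⟨s, hs⟩ => ?_⟩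
  · obtain ⟨s, -, hs⟩ := EReal.lt_iff_exists_real_btwn.1 h
    exact ⟨s, fun U hU => EReal.coe_le_coe_iff.1 (hs.le.trans (iInf₂_le U hU))⟩
  · exact (EReal.bot_lt_coe s).trans_le
      (le_iInf₂ fun U hU => EReal.coe_le_coe_iff.2 (hs U hU))

lemma zero_mem_barrS : (0 : Ω →ₘ[μ] ℝ) ∈ barrS A (kdual EE) :=
  mem_barrS_iff.2 ⟨(kdualSubmodule EE).zero_mem, 0, fun U _ => (ip_zero_right U).ge⟩

def barrCone (hAE : A ⊆ EE) : ConvexCone ℝ (Ω →ₘ[μ] ℝ) where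
  carrier := barrS A (kdual EE)
  smul_mem' c hc W hW := by
    obtain ⟨hWE, s, hs⟩ := mem_barrS_iff.1 hW
    refine mem_barrS_iff.2 ⟨(kdualSubmodule EE).smul_mem c hWE, c * s, fun U hU => ?_⟩
    rw [ip_smul_right]
    exact mul_le_mul_of_nonneg_left (hs U hU) hc.le
  add_mem' W₁ hW₁ W₂ hW₂ := by
    obtain ⟨hW₁E, s₁, hs₁⟩ := mem_barrS_iff.1 hW₁
    obtain ⟨hW₂E, s₂, hs₂⟩ := mem_barrS_iff.1 hW₂
    refine mem_barrS_iff.2 ⟨(kdualSubmodule EE).add_mem hW₁E hW₂E, s₁ + s₂, fun U hU => ?_⟩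
    rw [ip_add_right (hW₁E U (hAE hU)) (hW₂E U (hAE hU))]
    exact add_le_add (hs₁ U hU) (hs₂ U hU)

lemma exists_indicator {s : Set Ω} (hs : MeasurableSet s) :
    ∃ V : Ω →ₘ[μ] ℝ, EssBdd V ∧ 0 ≤ V ∧
      ∀ W : Ω →ₘ[μ] ℝ, (fun ω => V ω * W ω) =ᵐ[μ] s.indicator W := by
  have hm : AEStronglyMeasurable (s.indicator (1 : Ω → ℝ)) μ :=
    (measurable_one.indicator hs).aestronglyMeasurable
  refine ⟨AEEqFun.mk _ hm, ⟨1, ?_⟩, AEEqFun.coeFn_le.1 ?_, fun W => ?_⟩ <;>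
    filter_upwards [AEEqFun.coeFn_mk _ hm, AEEqFun.coeFn_zero (μ := μ) (β := ℝ)] with ω hω h0 <;>
    by_cases h : ω ∈ s <;> simp [hω, h0, h]

variable {nrmE : (Ω →ₘ[μ] ℝ) → ℝ}

lemma ip_nonneg_of_mem_barrS (hE : IsAdmissible EE nrmE) (hEA : ∀ V ∈ EE, 0 ≤ V → V ∈ A)
    {W : Ω →ₘ[μ] ℝ} (hW : W ∈ barrS A (kdual EE)) {V : Ω →ₘ[μ] ℝ} (hV : V ∈ EE)
    (hV0 : 0 ≤ V) : 0 ≤ ip V W := by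
  by_contra! hneg
  obtain ⟨-, s, hs⟩ := mem_barrS_iff.1 hW
  obtain ⟨n, hn⟩ := exists_nat_gt (s / ip V W)
  have hnV : (n : ℝ) • V ∈ A := hEA _ (hE.smul_mem _ V hV) <| AEEqFun.coeFn_le.1 <| by
    filter_upwards [AEEqFun.coeFn_le.2 hV0, AEEqFun.coeFn_smul (n : ℝ) V,
      AEEqFun.coeFn_zero (μ := μ) (β := ℝ)] with ω hω hnω h0
    simp only [h0, hnω, Pi.zero_apply, Pi.smul_apply, smul_eq_mul] at hω ⊢
    positivity
  have := hs _ hnV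
  rw [ip_smul_left] at this
  linarith [(div_lt_iff_of_neg hneg).1 hn]

lemma nonneg_of_mem_barrS (hE : IsAdmissible EE nrmE) (hEA : ∀ V ∈ EE, 0 ≤ V → V ∈ A)
    {W : Ω →ₘ[μ] ℝ} (hW : W ∈ barrS A (kdual EE)) : 0 ≤ W := by
  have key : ∀ s, MeasurableSet s → IntegrableOn W s μ ∧ 0 ≤ ∫ ω in s, W ω ∂μ := by
    intro s hs
    obtain ⟨V, hVb, hV0, hVW⟩ := exists_indicator (μ := μ) hs
    have hVE : V ∈ EE := hE.linfty_subset V hVb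
    refine ⟨(integrable_indicator_iff hs).1 ((hW.1 V hVE).congr (hVW W)), ?_⟩
    rw [← integral_indicator hs, ← integral_congr_ae (hVW W)]
    exact ip_nonneg_of_mem_barrS hE hEA hW hVE hV0
  have hW0 := ae_nonneg_of_forall_setIntegral_nonneg
    (integrableOn_univ.1 (key univ .univ).1) fun s hs _ => (key s hs).2
  refine AEEqFun.coeFn_le.1 ?_
  filter_upwards [hW0, AEEqFun.coeFn_zero (μ := μ) (β := ℝ)] with ω hω h0
  simpa [h0] using hω

lemma add_mem_strictPos {W₁ W₂ : Ω →ₘ[μ] ℝ} (h₁ : 0 ≤ W₁) (h₂ : W₂ ∈ strictPos μ) :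
    W₁ + W₂ ∈ strictPos μ := by
  filter_upwards [AEEqFun.coeFn_le.2 h₁, h₂, AEEqFun.coeFn_add W₁ W₂,
    AEEqFun.coeFn_zero (μ := μ) (β := ℝ)] with ω hω₁ hω₂ h h0
  simp only [h0, Pi.zero_apply] at hω₁
  simpa [h] using add_pos_of_nonneg_of_pos hω₁ hω₂

lemma smul_mem_strictPos {c : ℝ} (hc : 0 < c) {W : Ω →ₘ[μ] ℝ} (hW : W ∈ strictPos μ) :
    c • W ∈ strictPos μ := by
  filter_upwards [hW, AEEqFun.coeFn_smul c W] with ω hω h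
  simpa [h] using mul_pos hc hω

lemma nonneg_of_mem_strictPos {W : Ω →ₘ[μ] ℝ} (hW : W ∈ strictPos μ) : 0 ≤ W := by
  refine AEEqFun.coeFn_le.1 ?_
  filter_upwards [hW, AEEqFun.coeFn_zero (μ := μ) (β := ℝ)] with ω hω h0
  simpa [h0] using hω.le

variable (μ) in
def strictPosCone : ConvexCone ℝ (Ω →ₘ[μ] ℝ) where
  carrier := strictPos μ ∪ {0}
  smul_mem' c hc W hW := by
    rcases hW with hW | rfl
    · exact .inl (smul_mem_strictPos hc hW)
    · exact .inr (smul_zero c)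
  add_mem' W₁ hW₁ W₂ hW₂ := by
    rcases hW₁ with hW₁ | rfl
    · rcases hW₂ with hW₂ | rfl
      · exact .inl (add_mem_strictPos (nonneg_of_mem_strictPos hW₁) hW₂)
      · exact .inl ((add_zero W₁).symm ▸ hW₁)
    · simpa using hW₂

end BarrierCone

section Duality

variable {μ : Measure Ω} {Li : Fin d → Set (Ω →ₘ[μ] ℝ)} {nrmX : Fin d → (Ω →ₘ[μ] ℝ) → ℝ}
  {EE A : Set (Ω →ₘ[μ] ℝ)} {S : (Fin d → Ω →ₘ[μ] ℝ) → Ω →ₘ[μ] ℝ}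

lemma IsAdmissibleAcceptance.convex_set {XX : Set (Fin d → Ω →ₘ[μ] ℝ)} {EE' : Set (Ω →ₘ[μ] ℝ)}
    (hA : IsAdmissibleAcceptance XX EE EE' S A) : Convex ℝ A := by
  intro U hU V hV a b ha hb hab
  obtain rfl : b = 1 - a := by linarith
  exact hA.convex U hU V hV a ha (by linarith)

lemma IsAdmissibleAcceptance.mem_of_nonneg {XX : Set (Fin d → Ω →ₘ[μ] ℝ)}
    {EE' : Set (Ω →ₘ[μ] ℝ)} (hA : IsAdmissibleAcceptance XX EE EE' S A) :
    ∀ V ∈ EE, 0 ≤ V → V ∈ A :=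
  fun V hV hV0 => by simpa using hA.mono 0 hA.zero_mem V hV hV0

theorem exists_mem_barrS_lt_suppS (hAE : A ⊆ EE) (hAc : Convex ℝ A)
    (hAcl : @IsClosed EE (wtop1 EE (kdual EE)) {U : EE | (U : Ω →ₘ[μ] ℝ) ∈ A})
    (hAne : A.Nonempty) {U : Ω →ₘ[μ] ℝ} (hU : U ∈ EE) (hUA : U ∉ A) :
    ∃ W ∈ barrS A (kdual EE), ((ip U W : ℝ) : EReal) < suppS A W := by
  let _ : TopologicalSpace EE := wtop1 EE (kdual EE)
  obtain ⟨U₁, hU₁⟩ := hAne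
  have hφ : Convex ℝ {p : (Ω →ₘ[μ] ℝ) × ℝ | p.1 ∈ A ∧ (p.2 : EReal) ≤ (fun _ => 0) p.1} := by
    convert hAc.prod (convex_Iic (0 : ℝ)) using 1
    ext p
    simp [EReal.coe_nonpos]
  obtain ⟨F, lam, a, u, -, hau, hsep⟩ := exists_local_separation (φ := fun _ => 0) hAE hφ
    (fun V (W : kdual EE) => ip V W)
    (fun W V hV V' hV' a b _ _ _ => ip_smul_add_smul_left (hAE hV) (hAE hV') W.2 a b)
    (x₀ := ⟨U, hU⟩) (c := -1) (c' := 0) (by norm_num)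
    (by filter_upwards [hAcl.isOpen_compl.mem_nhds hUA] with V hV hVA using absurd hVA hV)
    hU₁ (t₁ := 0) (by simp)
  set W := ∑ j : F, lam j • ((j : kdual EE) : Ω →ₘ[μ] ℝ)
  have hWE : W ∈ kdual EE := (kdualSubmodule EE).sum_mem fun j _ =>
    (kdualSubmodule EE).smul_mem _ (j : kdual EE).2
  have hipW : ∀ V ∈ EE, ip V W = ∑ j : F, lam j * ip V ((j : kdual EE) : Ω →ₘ[μ] ℝ) :=
    fun V hV => ip_sum_smul_right hV _ _ fun j _ => (j : kdual EE).2
  have hlow : ∀ V ∈ A, ip U W + u ≤ ip V W := fun V hV => by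
    have h := hsep V hV 0 le_rfl
    simp only [mul_sub, Finset.sum_sub_distrib, mul_zero, add_zero] at h
    rw [hipW V (hAE hV), hipW U hU]
    linarith
  refine ⟨W, mem_barrS_iff.2 ⟨hWE, _, hlow⟩, ?_⟩
  exact (EReal.coe_lt_coe_iff.2 (by linarith)).trans_le
    (le_iInf₂ fun V hV => EReal.coe_le_coe_iff.2 (hlow V hV))

theorem exists_mem_strictPos_lt_suppS (hAE : A ⊆ EE) {U : Ω →ₘ[μ] ℝ} (hU : U ∈ EE)
    {W : Ω →ₘ[μ] ℝ} (hW : W ∈ barrS A (kdual EE)) (hW0 : 0 ≤ W)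
    (hUW : ((ip U W : ℝ) : EReal) < suppS A W) {Wh : Ω →ₘ[μ] ℝ}
    (hWh : Wh ∈ barrS A (kdual EE) ∩ strictPos μ) :
    ∃ W' ∈ barrS A (kdual EE) ∩ strictPos μ, ((ip U W' : ℝ) : EReal) < suppS A W' := by
  obtain ⟨s, hUs, hs⟩ := EReal.lt_iff_exists_real_btwn.1 hUW
  obtain ⟨-, sh, hsh⟩ := mem_barrS_iff.1 hWh.1
  obtain ⟨ε, hε, hεsmall⟩ :=
    exists_pos_mul_lt (sub_pos.2 (EReal.coe_lt_coe_iff.1 hUs)) (ip U Wh - sh)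
  have hip : ∀ V ∈ EE, ip V (W + ε • Wh) = ip V W + ε * ip V Wh := fun V hV => by
    rw [ip_add_right (hW.1 V hV) ((kdualSubmodule EE).smul_mem ε hWh.1.1 V hV), ip_smul_right]
  have hlow : ∀ V ∈ A, s + ε * sh ≤ ip V (W + ε • Wh) := fun V hV => by
    rw [hip V (hAE hV)]
    nlinarith [EReal.coe_le_coe_iff.1 (hs.le.trans (iInf₂_le V hV)), hsh V hV]
  refine ⟨W + ε • Wh, ⟨(barrCone hAE).add_mem hW ((barrCone hAE).smul_mem hε hWh.1),
    add_mem_strictPos hW0 (smul_mem_strictPos hε hWh.2)⟩, ?_⟩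
  refine lt_of_lt_of_le (b := ((s + ε * sh : ℝ) : EReal)) (EReal.coe_lt_coe_iff.2 ?_)
    (le_iInf₂ fun V hV => EReal.coe_le_coe_iff.2 (hlow V hV))
  rw [hip U hU]
  linarith

lemma concaveOn_ip_impact (hLi : ∀ i, IsAdmissible (Li i) (nrmX i))
    {XX' : Set (Fin d → Ω →ₘ[μ] ℝ)} {EE' : Set (Ω →ₘ[μ] ℝ)}
    (hS : IsAdmissibleImpact (prodSet Li) XX' EE EE' S) {W : Ω →ₘ[μ] ℝ} (hW : W ∈ kdual EE)
    (hW0 : 0 ≤ W) : ConcaveOn ℝ (prodSet Li) fun Y => ip (S Y) W := by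
  refine ⟨convex_prodSet hLi, fun X hX Y hY a b ha hb hab => ?_⟩
  obtain rfl : b = 1 - a := by linarith
  have hSX := subset_kdual_kdual EE (hS.mapsTo X hX)
  have hSY := subset_kdual_kdual EE (hS.mapsTo Y hY)
  have hcomb : a • S X + (1 - a) • S Y ∈ kdual (kdual EE) :=
    (kdualSubmodule _).add_mem ((kdualSubmodule _).smul_mem a hSX)
      ((kdualSubmodule _).smul_mem (1 - a) hSY)
  rw [smul_eq_mul, smul_eq_mul,
    ← ip_smul_add_smul_left (hS.mapsTo X hX) (hS.mapsTo Y hY) hW]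
  refine ip_mono_left (hS.concave X hX Y hY a ha (by linarith)) hW0
    ((subset_kdual_kdual _ hW _ hcomb).congr ?_)
    (hW _ (hS.mapsTo _ (smul_add_smul_mem_prodSet hLi hX hY a (1 - a))))
  filter_upwards with ω
  ring

end Duality

section Majorants

variable {μ : Measure Ω} {Li : Fin d → Set (Ω →ₘ[μ] ℝ)} {nrmX : Fin d → (Ω →ₘ[μ] ℝ) → ℝ}
  {EE A : Set (Ω →ₘ[μ] ℝ)} {nrmE : (Ω →ₘ[μ] ℝ) → ℝ}
  {S : (Fin d → Ω →ₘ[μ] ℝ) → Ω →ₘ[μ] ℝ}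

theorem exists_pairing_majorant {φ : (Fin d → Ω →ₘ[μ] ℝ) → ℝ} (hφ : ConcaveOn ℝ (prodSet Li) φ)
    (hφusc : @UpperSemicontinuous (prodSet Li) ℝ
      (wtop (prodSet Li) (prodSet fun i => kdual (Li i))) _ fun Y => φ Y)
    {X : Fin d → Ω →ₘ[μ] ℝ} (hX : X ∈ prodSet Li) {β : ℝ} (hβ : φ X < β) :
    ∃ Z ∈ prodSet fun i => kdual (Li i),
      ∀ Y ∈ prodSet Li, φ Y ≤ β + pairing Y Z - pairing X Z := by
  obtain ⟨F, lam, a, u, -, hau, hsep⟩ := exists_local_separation (φ := fun Y => (φ Y : EReal))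
    subset_rfl (by simpa only [EReal.coe_le_coe_iff] using hφ.convex_hypograph)
    (fun Y (Z : prodSet fun i => kdual (Li i)) => pairing Y Z)
    (fun Z Y hY Y' hY' a b _ _ _ => pairing_smul_add_smul_left hY hY' Z.2 a b)
    (x₀ := ⟨X, hX⟩) (c := (φ X + β) / 2) (c' := β) (by linarith)
    (by filter_upwards [hφusc ⟨X, hX⟩ _ (show φ X < (φ X + β) / 2 by linarith)] with Y hY _
        using EReal.coe_lt_coe_iff.2 hY)
    hX le_rfl
  set Z := ∑ j : F, lam j • ((j : prodSet fun i => kdual (Li i)) : Fin d → Ω →ₘ[μ] ℝ)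
  have hZ : Z ∈ prodSet fun i => kdual (Li i) :=
    sum_smul_mem_prodSet_kdual _ _ fun j _ => (j : prodSet fun i => kdual (Li i)).2
  replace hsep : ∀ Y ∈ prodSet Li, u < pairing Y Z - pairing X Z + a * φ Y := fun Y hY => by
    have hpZ : ∀ Y ∈ prodSet Li, pairing Y Z = ∑ j : F, lam j *
        pairing Y ((j : prodSet fun i => kdual (Li i)) : Fin d → Ω →ₘ[μ] ℝ) :=
      fun Y hY => pairing_sum_smul_right hY _ _ fun j _ => (j : prodSet fun i => kdual (Li i)).2
    have h := hsep Y hY (φ Y) le_rfl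
    simp only [mul_sub, Finset.sum_sub_distrib] at h
    rwa [hpZ Y hY, hpZ X hX]
  have ha : a < 0 := by nlinarith [hsep X hX]
  refine ⟨(-a)⁻¹ • Z, fun i => (kdualSubmodule _).smul_mem _ (hZ i), fun Y hY => ?_⟩
  have hinv : -a * (-a)⁻¹ = 1 := mul_inv_cancel₀ (by linarith)
  rw [pairing_smul_right, pairing_smul_right, ← mul_le_mul_iff_right₀ (neg_pos.2 ha)]
  calc -a * φ Y ≤ -a * β + pairing Y Z - pairing X Z := by linarith [hsep Y hY]
    _ = _ := by linear_combination (pairing X Z - pairing Y Z) * hinv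

theorem mem_of_penalty_le (hLi : ∀ i, IsAdmissible (Li i) (nrmX i)) (hE : IsAdmissible EE nrmE)
    (hS : IsAdmissibleImpact (prodSet Li) (prodSet fun i => kdual (Li i)) EE (kdual EE) S)
    (hEA : ∀ V ∈ EE, 0 ≤ V → V ∈ A) {K : ConvexCone ℝ (Ω →ₘ[μ] ℝ)}
    (hKA : (K : Set (Ω →ₘ[μ] ℝ)) ⊆ barrS A (kdual EE))
    (hsep : ∀ X ∈ prodSet Li, S X ∉ A → ∃ W ∈ K, ((ip (S X) W : ℝ) : EReal) < suppS A W)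
    {X : Fin d → Ω →ₘ[μ] ℝ} (hX : X ∈ prodSet Li) {C : ℝ}
    (hmaj : ∀ Z ∈ prodSet fun i => kdual (Li i),
      penalty (prodSet Li) A S K Z ≤ ((pairing X Z - C : ℝ) : EReal)) :
    S X ∈ A := by
  by_contra hXA
  obtain ⟨W, hWK, hWsep⟩ := hsep X hX hXA
  have hWE : W ∈ kdual EE := (hKA hWK).1
  have hW0 : 0 ≤ W := nonneg_of_mem_barrS hE hEA (hKA hWK)
  obtain ⟨s, hXs, hs⟩ := EReal.lt_iff_exists_real_btwn.1 hWsep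
  replace hXs : ip (S X) W < s := EReal.coe_lt_coe_iff.1 hXs
  obtain ⟨Z, hZ, hZmaj⟩ := exists_pairing_majorant (concaveOn_ip_impact hLi hS hWE hW0)
    (hS.usc W hWE hW0) hX (β := (ip (S X) W + s) / 2) (by linarith)
  -- along the ray `r • Z` the penalty grows like `r * s`, faster than the majorant allows
  set r := (|C| + 1) / (s - (ip (S X) W + s) / 2)
  have hr : 0 < r := div_pos (by positivity) (by linarith)
  have hlow : ((r * s + r * (pairing X Z - (ip (S X) W + s) / 2) : ℝ) : EReal) ≤
      penalty (prodSet Li) A S K (r • Z) := by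
    refine coe_le_penalty (K.smul_mem hr hWK) (fun U hU => ?_) (fun Y hY => ?_)
    · rw [ip_smul_right]
      exact mul_le_mul_of_nonneg_left
        (EReal.coe_le_coe_iff.1 (hs.le.trans (iInf₂_le U hU))) hr.le
    · rw [pairing_smul_right, ip_smul_right, ← mul_sub]
      exact mul_le_mul_of_nonneg_left (by linarith [hZmaj Y hY]) hr.le
  have h := EReal.coe_le_coe_iff.1
    (hlow.trans (hmaj _ fun i => (kdualSubmodule _).smul_mem r (hZ i)))
  have hrgap : r * (s - (ip (S X) W + s) / 2) = |C| + 1 := div_mul_cancel₀ _ (by linarith)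
  rw [pairing_smul_right] at h
  linarith [neg_le_abs C]

end Majorants

section HardDirection

variable {μ : Measure Ω} {Li : Fin d → Set (Ω →ₘ[μ] ℝ)} {nrmX : Fin d → (Ω →ₘ[μ] ℝ) → ℝ}
  {EE A : Set (Ω →ₘ[μ] ℝ)} {nrmE : (Ω →ₘ[μ] ℝ) → ℝ}
  {S : (Fin d → Ω →ₘ[μ] ℝ) → Ω →ₘ[μ] ℝ} {φ : (Fin d → Ω →ₘ[μ] ℝ) → EReal}

lemma exists_majorant_of_nonvertical (hLi : ∀ i, IsAdmissible (Li i) (nrmX i))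
    {Xt Z₀ : Fin d → Ω →ₘ[μ] ℝ} (hXt : Xt ∈ prodSet Li) {a u c' : ℝ} (ha : a < 0)
    (hau : a * c' < u) (hZ₀ : u < -pairing Xt Z₀)
    (hsep : ∀ Z ∈ prodSet fun i => kdual (Li i), ∀ t : ℝ, (t : EReal) ≤ φ Z →
      u < pairing Xt Z - pairing Xt Z₀ + a * t) :
    ∃ X ∈ prodSet Li, ∃ C : ℝ, (∀ Z ∈ prodSet fun i => kdual (Li i),
      φ Z ≤ ((pairing X Z - C : ℝ) : EReal)) ∧ pairing X Z₀ < c' := by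
  have hb : 0 < -a := neg_pos.2 ha
  refine ⟨(-a)⁻¹ • Xt, fun i => (hLi i).smul_mem _ _ (hXt i),
    (-a)⁻¹ * (pairing Xt Z₀ + u), fun Z hZ => ?_, ?_⟩
  · refine EReal.ge_of_forall_gt_iff_ge.1 fun t ht => EReal.coe_le_coe_iff.2 ?_
    rw [pairing_smul_left, ← mul_sub, le_inv_mul_iff₀ hb]
    linarith [hsep Z hZ t ht.le]
  · rw [pairing_smul_left, inv_mul_lt_iff₀ hb]
    linarith

lemma exists_majorant_of_vertical (hLi : ∀ i, IsAdmissible (Li i) (nrmX i))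
    {Xh Xt Z₀ : Fin d → Ω →ₘ[μ] ℝ} (hXh : Xh ∈ prodSet Li) (hXt : Xt ∈ prodSet Li)
    (hZ₀ : Z₀ ∈ prodSet fun i => kdual (Li i)) {u c' : ℝ} (hu : 0 < u)
    (hXtZ₀ : u < -pairing Xt Z₀)
    (hφXh : ∀ Z ∈ prodSet fun i => kdual (Li i), φ Z ≤ pairing Xh Z)
    (hsep : ∀ Z ∈ prodSet fun i => kdual (Li i), ∀ t : ℝ, (t : EReal) ≤ φ Z →
      u < pairing Xt Z - pairing Xt Z₀) :
    ∃ X ∈ prodSet Li, ∃ C : ℝ, (∀ Z ∈ prodSet fun i => kdual (Li i),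
      φ Z ≤ ((pairing X Z - C : ℝ) : EReal)) ∧ pairing X Z₀ < c' := by
  set r := max 0 ((pairing Xh Z₀ - c') / u + 1)
  have hr0 : 0 ≤ r := le_max_left _ _
  have hr : pairing Xh Z₀ - c' < r * u :=
    (div_lt_iff₀ hu).1 ((lt_add_one _).trans_le (le_max_right _ _))
  have hpX : ∀ Z ∈ prodSet fun i => kdual (Li i),
      pairing (Xh + r • Xt) Z = pairing Xh Z + r * pairing Xt Z := fun Z hZ => by
    simpa using pairing_smul_add_smul_left hXh hXt hZ 1 r
  refine ⟨Xh + r • Xt, by simpa using smul_add_smul_mem_prodSet hLi hXh hXt 1 r,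
    r * (pairing Xt Z₀ + u), fun Z hZ => ?_, ?_⟩
  · refine EReal.ge_of_forall_gt_iff_ge.1 fun t ht => EReal.coe_le_coe_iff.2 ?_
    have h := mul_le_mul_of_nonneg_left (hsep Z hZ t ht.le).le hr0
    rw [hpX Z hZ]
    linarith [EReal.coe_le_coe_iff.1 (ht.le.trans (hφXh Z hZ))]
  · rw [hpX Z₀ hZ₀]
    nlinarith [mul_le_mul_of_nonneg_left hXtZ₀.le hr0]

theorem exists_separation_penalty (hLi : ∀ i, IsAdmissible (Li i) (nrmX i)) {K : Set (Ω →ₘ[μ] ℝ)}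
    (hK : Convex ℝ K) (hK0 : (0 : Ω →ₘ[μ] ℝ) ∈ K) (hKE : K ⊆ kdual EE) (hAE : A ⊆ EE)
    (hSE : ∀ X ∈ prodSet Li, S X ∈ EE) {g : (prodSet fun i => kdual (Li i)) → EReal}
    (hg : @UpperSemicontinuous _ EReal (wtop (prodSet fun i => kdual (Li i)) (prodSet Li)) _ g)
    (hpen : ∀ Z : prodSet fun i => kdual (Li i), penalty (prodSet Li) A S K Z ≤ g Z)
    {Z₀ : prodSet fun i => kdual (Li i)} {c c' : ℝ} (hgc : g Z₀ < c) (hcc' : c < c') :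
    ∃ Xt ∈ prodSet Li, ∃ a u : ℝ, a ≤ 0 ∧ a * c' < u ∧
      ∀ Z ∈ prodSet fun i => kdual (Li i), ∀ t : ℝ, (t : EReal) ≤ penalty (prodSet Li) A S K Z →
        u < pairing Xt Z - pairing Xt Z₀ + a * t := by
  obtain ⟨F, lam, a, u, ha, hau, hsep⟩ := exists_local_separation
    (φ := penalty (prodSet Li) A S K) subset_rfl
    (convex_hypograph_of_convex_strict_hypograph
      (convex_strict_hypograph_penalty hK hKE hAE hSE))
    (fun Z (X : prodSet Li) => pairing Z X)
    (fun X Z hZ Z' hZ' a b _ _ _ => by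
      rw [pairing_comm, pairing_smul_add_smul_right X.2 hZ hZ', pairing_comm Z, pairing_comm Z'])
    (x₀ := Z₀) hcc' (by filter_upwards [hg Z₀ c hgc] with Z hZ _ using (hpen Z).trans_lt hZ)
    (fun i => (kdualSubmodule _).zero_mem) (penalty_zero_nonneg hK0)
  set Xt := ∑ j : F, lam j • ((j : prodSet Li) : Fin d → Ω →ₘ[μ] ℝ)
  have hpXt : ∀ Z ∈ prodSet fun i => kdual (Li i),
      pairing Xt Z = ∑ j : F, lam j * pairing Z ((j : prodSet Li) : Fin d → Ω →ₘ[μ] ℝ) :=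
    fun Z hZ => (pairing_comm _ _).trans (pairing_sum_smul_right hZ _ _ fun j _ =>
      prodSet_subset_kdual_kdual (j : prodSet Li).2)
  refine ⟨Xt, sum_smul_mem_prodSet hLi _ _ fun j _ => (j : prodSet Li).2, a, u, ha, hau,
    fun Z hZ t ht => ?_⟩
  have h := hsep Z hZ t ht
  simp only [mul_sub, Finset.sum_sub_distrib] at h
  rwa [hpXt Z hZ, hpXt Z₀ Z₀.2]

theorem exists_mem_sysAcc_pairing_lt (hLi : ∀ i, IsAdmissible (Li i) (nrmX i))
    (hE : IsAdmissible EE nrmE)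
    (hS : IsAdmissibleImpact (prodSet Li) (prodSet fun i => kdual (Li i)) EE (kdual EE) S)
    (hA : IsAdmissibleAcceptance (prodSet Li) EE (kdual EE) S A)
    {K : ConvexCone ℝ (Ω →ₘ[μ] ℝ)} (hK0 : (0 : Ω →ₘ[μ] ℝ) ∈ K)
    (hKA : (K : Set (Ω →ₘ[μ] ℝ)) ⊆ barrS A (kdual EE))
    (hsep : ∀ X ∈ prodSet Li, S X ∉ A → ∃ W ∈ K, ((ip (S X) W : ℝ) : EReal) < suppS A W)
    {g : (prodSet fun i => kdual (Li i)) → EReal}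
    (hg : @UpperSemicontinuous _ EReal (wtop (prodSet fun i => kdual (Li i)) (prodSet Li)) _ g)
    (hpen : ∀ Z : prodSet fun i => kdual (Li i), penalty (prodSet Li) A S K Z ≤ g Z)
    (Z₀ : prodSet fun i => kdual (Li i)) {c' : ℝ} (hc' : g Z₀ < c') :
    ∃ X ∈ sysAcc (prodSet Li) S A, pairing X Z₀ < c' := by
  obtain ⟨c, hgc, hcc'⟩ := EReal.lt_iff_exists_real_btwn.1 hc'
  obtain ⟨Xt, hXt, a, u, ha, hau, hXtsep⟩ := exists_separation_penalty hLi K.convex hK0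
    (fun W hW => (hKA hW).1) hA.subset hS.mapsTo hg hpen hgc (EReal.coe_lt_coe_iff.1 hcc')
  have hXtZ₀ : u < -pairing Xt Z₀ := by
    simpa [pairing_zero_right] using
      hXtsep 0 (fun i => (kdualSubmodule _).zero_mem) 0 (penalty_zero_nonneg hK0)
  obtain ⟨X, hX, C, hmaj, hXZ₀⟩ : ∃ X ∈ prodSet Li, ∃ C : ℝ,
      (∀ Z ∈ prodSet fun i => kdual (Li i),
        penalty (prodSet Li) A S K Z ≤ ((pairing X Z - C : ℝ) : EReal)) ∧ pairing X Z₀ < c' := by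
    rcases ha.lt_or_eq with ha | rfl
    · exact exists_majorant_of_nonvertical hLi hXt ha hau hXtZ₀ hXtsep
    · obtain ⟨Xh, hXh, hXhA⟩ := hA.preimage_nonempty
      exact exists_majorant_of_vertical hLi hXh hXt Z₀.2 (by simpa using hau) hXtZ₀
        (fun Z _ => (penalty_le_suppV Z).trans (iInf₂_le Xh ⟨hXh, hXhA⟩))
        (fun Z hZ t ht => by simpa using hXtsep Z hZ t ht)
  exact ⟨X, ⟨hX, mem_of_penalty_le hLi hE hS hA.mem_of_nonneg hKA hsep hX hmaj⟩, hXZ₀⟩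

theorem suppV_eq_uscHull_penalty (hLi : ∀ i, IsAdmissible (Li i) (nrmX i))
    (hE : IsAdmissible EE nrmE)
    (hS : IsAdmissibleImpact (prodSet Li) (prodSet fun i => kdual (Li i)) EE (kdual EE) S)
    (hA : IsAdmissibleAcceptance (prodSet Li) EE (kdual EE) S A)
    {K : ConvexCone ℝ (Ω →ₘ[μ] ℝ)} (hK0 : (0 : Ω →ₘ[μ] ℝ) ∈ K)
    (hKA : (K : Set (Ω →ₘ[μ] ℝ)) ⊆ barrS A (kdual EE))
    (hsep : ∀ X ∈ prodSet Li, S X ∉ A → ∃ W ∈ K, ((ip (S X) W : ℝ) : EReal) < suppS A W)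
    (Z : prodSet fun i => kdual (Li i)) :
    suppV (sysAcc (prodSet Li) S A) Z =
      uscHull (wtop (prodSet fun i => kdual (Li i)) (prodSet Li))
        (fun Z' => penalty (prodSet Li) A S K Z') Z := by
  refine le_antisymm (le_iInf₂ fun g ⟨hg, hpen⟩ => ?_)
    (uscHull_le (upperSemicontinuous_suppV fun X hX => hX.1) (fun Z' => penalty_le_suppV _) Z)
  by_contra! hgZ
  obtain ⟨c', hgc', hc'⟩ := EReal.lt_iff_exists_real_btwn.1 hgZ
  obtain ⟨X, hX, hXZ⟩ := exists_mem_sysAcc_pairing_lt hLi hE hS hA hK0 hKA hsep hg hpen Z hgc'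
  have hle : suppV (sysAcc (prodSet Li) S A) Z ≤ pairing X Z := iInf₂_le X hX
  exact (hle.trans_lt ((EReal.coe_lt_coe_iff.2 hXZ).trans hc')).false

end HardDirection

theorem statement10_general {μ : Measure Ω} {d : ℕ}
    (Li : Fin d → Set (Ω →ₘ[μ] ℝ)) (nrmX : Fin d → ((Ω →ₘ[μ] ℝ) → ℝ))
    (EE : Set (Ω →ₘ[μ] ℝ)) (nrmE : (Ω →ₘ[μ] ℝ) → ℝ)
    (S : (Fin d → (Ω →ₘ[μ] ℝ)) → (Ω →ₘ[μ] ℝ)) (A : Set (Ω →ₘ[μ] ℝ))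
    (hLi : ∀ i, IsAdmissible (Li i) (nrmX i))
    (hE : IsAdmissible EE nrmE)
    (hS : IsAdmissibleImpact (prodSet Li) (prodSet fun i => kdual (Li i)) EE (kdual EE) S)
    (hA : IsAdmissibleAcceptance (prodSet Li) EE (kdual EE) S A) :
    (∀ Z : ↥(prodSet fun i => kdual (Li i)),
      suppV (sysAcc (prodSet Li) S A) (Z : Fin d → (Ω →ₘ[μ] ℝ)) =
        uscHull (wtop (prodSet fun i => kdual (Li i)) (prodSet Li))
          (fun Z' : ↥(prodSet fun i => kdual (Li i)) =>
            alpha (prodSet Li) (kdual EE) A S (Z' : Fin d → (Ω →ₘ[μ] ℝ))) Z) ∧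
    ((barrS A (kdual EE) ∩ strictPos μ).Nonempty →
      ∀ Z : ↥(prodSet fun i => kdual (Li i)),
        suppV (sysAcc (prodSet Li) S A) (Z : Fin d → (Ω →ₘ[μ] ℝ)) =
          uscHull (wtop (prodSet fun i => kdual (Li i)) (prodSet Li))
            (fun Z' : ↥(prodSet fun i => kdual (Li i)) =>
              alphaPlus (prodSet Li) (kdual EE) A S (Z' : Fin d → (Ω →ₘ[μ] ℝ))) Z) := by
  have hsep : ∀ X ∈ prodSet Li, S X ∉ A →
      ∃ W ∈ barrS A (kdual EE), ((ip (S X) W : ℝ) : EReal) < suppS A W :=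
    fun X hX hXA => exists_mem_barrS_lt_suppS hA.subset hA.convex_set hA.closed
      ⟨0, hA.zero_mem⟩ (hS.mapsTo X hX) hXA
  refine ⟨suppV_eq_uscHull_penalty hLi hE hS hA (K := barrCone hA.subset) zero_mem_barrS
    subset_rfl hsep, fun ⟨Wh, hWh⟩ => suppV_eq_uscHull_penalty hLi hE hS hA
    (K := barrCone hA.subset ⊓ strictPosCone μ) ⟨zero_mem_barrS, .inr rfl⟩
    inter_subset_left fun X hX hXA => ?_⟩
  obtain ⟨W, hW, hWsep⟩ := hsep X hX hXA
  obtain ⟨W', hW', hW'sep⟩ := exists_mem_strictPos_lt_suppS hA.subset (hS.mapsTo X hX) hW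
    (nonneg_of_mem_barrS hE hA.mem_of_nonneg hW) hWsep hWh
  exact ⟨W', ⟨hW'.1, .inl hW'.2⟩, hW'sep⟩

/-- the support function of `S⁻¹(A)` is the `σ(X',X)`-upper semicontinuous hull
of `α` (and of `α⁺` provided `bar(A) ∩ E'₊₊ ≠ ∅`). -/
theorem statement10 {μ : Measure Ω} [IsProbabilityMeasure μ] {d : ℕ}
    (Li : Fin d → Set (Ω →ₘ[μ] ℝ)) (nrmX : Fin d → ((Ω →ₘ[μ] ℝ) → ℝ))
    (EE : Set (Ω →ₘ[μ] ℝ)) (nrmE : (Ω →ₘ[μ] ℝ) → ℝ)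
    (S : (Fin d → (Ω →ₘ[μ] ℝ)) → (Ω →ₘ[μ] ℝ)) (A : Set (Ω →ₘ[μ] ℝ))
    (hLi : ∀ i, IsAdmissible (Li i) (nrmX i))
    (hE : IsAdmissible EE nrmE)
    (hS : IsAdmissibleImpact (prodSet Li) (prodSet fun i => kdual (Li i)) EE (kdual EE) S)
    (hA : IsAdmissibleAcceptance (prodSet Li) EE (kdual EE) S A) :
    (∀ Z : ↥(prodSet fun i => kdual (Li i)),
      suppV (sysAcc (prodSet Li) S A) (Z : Fin d → (Ω →ₘ[μ] ℝ)) =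
        uscHull (wtop (prodSet fun i => kdual (Li i)) (prodSet Li))
          (fun Z' : ↥(prodSet fun i => kdual (Li i)) =>
            alpha (prodSet Li) (kdual EE) A S (Z' : Fin d → (Ω →ₘ[μ] ℝ))) Z) ∧
    ((barrS A (kdual EE) ∩ strictPos μ).Nonempty →
      ∀ Z : ↥(prodSet fun i => kdual (Li i)),
        suppV (sysAcc (prodSet Li) S A) (Z : Fin d → (Ω →ₘ[μ] ℝ)) =
          uscHull (wtop (prodSet fun i => kdual (Li i)) (prodSet Li))
            (fun Z' : ↥(prodSet fun i => kdual (Li i)) =>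
              alphaPlus (prodSet Li) (kdual EE) A S (Z' : Fin d → (Ω →ₘ[μ] ℝ))) Z) :=
  statement10_general Li nrmX EE nrmE S A hLi hE hS hA

end SystemicRisk
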